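/- Let m ≥ 2 and n₁,…,n_m ≥ 2 be integers, let S = [n₁] × ⋯ × [n_m], and let C = (C_α)_{α∈S} be complex numbers with C_α ≠ 0 for all α ∈ S. Define U_C := {ψ ∈ ℂ^{n₁} ⊗ ⋯ ⊗ ℂ^{n_m} : Σ_{α∈S, α₁+⋯+α_m = k} C_α ψ_α = 0 for every k ∈ {m, m+1, …, n₁+⋯+n_m}}, where ψ_α denotes the coordinate of ψ with respect to the standard product basis vector e_{α₁} ⊗ ⋯ ⊗ e_{α_m}. Then U_C is completely entangled (it contains no nonzero product vector) and dim U_C = n₁⋯n_m − (n₁+⋯+n_m) + m − 1. -/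

import Mathlib

/-
Common definitions.

We model the tensor product `ℂ^{n₁} ⊗ ⋯ ⊗ ℂ^{n_m}` concretely as
`EuclideanSpace ℂ (∀ i, Fin (n i))` (coordinates with respect to the standard
product basis), and the `d`-fold tensor power `(ℂ^a)^{⊗ d}` as
`EuclideanSpace ℂ (ι → Fin a)` for an index type `ι` of cardinality `d`.
-/

noncomputable section

open Finset

/-- The product (elementary tensor) vector `φ₁ ⊗ ⋯ ⊗ φ_m` in a multipartite space,
in coordinates. -/
def prodVec {m : ℕ} {n : Fin m → ℕ} (φ : ∀ i, EuclideanSpace ℂ (Fin (n i))) :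
    EuclideanSpace ℂ (∀ i, Fin (n i)) :=
  WithLp.toLp 2 (fun v => ∏ i, φ i (v i))

/-- The product vector `φ₁ ⊗ ⋯ ⊗ φ_m` in `(ℂ^n)^{⊗ m}`, in coordinates. -/
def prodVecC {m n : ℕ} (φ : Fin m → EuclideanSpace ℂ (Fin n)) :
    EuclideanSpace ℂ (Fin m → Fin n) :=
  WithLp.toLp 2 (fun v => ∏ i, φ i (v i))

/-- The product vector `φ₁ ⊗ φ₂` in a bipartite space, in coordinates. -/
def prodVec2 {ι₁ ι₂ : Type*} (φ₁ : EuclideanSpace ℂ ι₁) (φ₂ : EuclideanSpace ℂ ι₂) :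
    EuclideanSpace ℂ (ι₁ × ι₂) :=
  WithLp.toLp 2 (fun p => φ₁ p.1 * φ₂ p.2)

/-- Geometric measure of entanglement of a subspace of a multipartite space:
`E(U) = inf { 1 - ⟨φ₁⊗⋯⊗φ_m, Π_U (φ₁⊗⋯⊗φ_m)⟩ : ‖φ_i‖ = 1 }`, where we use that
`⟨x, Π_U x⟩ = ‖Π_U x‖²`. -/
def gme {m : ℕ} {n : Fin m → ℕ} (U : Submodule ℂ (EuclideanSpace ℂ (∀ i, Fin (n i)))) : ℝ :=
  sInf {x | ∃ φ : ∀ i, EuclideanSpace ℂ (Fin (n i)),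
    (∀ i, ‖φ i‖ = 1) ∧ x = 1 - ‖Submodule.orthogonalProjectionOnto U (prodVec φ)‖ ^ 2}

/-- Geometric measure of entanglement of a subspace of `(ℂ^n)^{⊗ m}`. -/
def gmeC {m n : ℕ} (U : Submodule ℂ (EuclideanSpace ℂ (Fin m → Fin n))) : ℝ :=
  sInf {x | ∃ φ : Fin m → EuclideanSpace ℂ (Fin n),
    (∀ i, ‖φ i‖ = 1) ∧ x = 1 - ‖Submodule.orthogonalProjectionOnto U (prodVecC φ)‖ ^ 2}

/-- Geometric measure of entanglement of a subspace of a bipartite space. -/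
def gme2 {ι₁ ι₂ : Type*} [Fintype ι₁] [Fintype ι₂]
    (U : Submodule ℂ (EuclideanSpace ℂ (ι₁ × ι₂))) : ℝ :=
  sInf {x | ∃ (φ₁ : EuclideanSpace ℂ ι₁) (φ₂ : EuclideanSpace ℂ ι₂),
    ‖φ₁‖ = 1 ∧ ‖φ₂‖ = 1 ∧ x = 1 - ‖Submodule.orthogonalProjectionOnto U (prodVec2 φ₁ φ₂)‖ ^ 2}

/-- The symmetric subspace `S^{|ι|}(ℂ^a)` of `(ℂ^a)^{⊗ ι}`: tensors invariant under all
permutations of the tensor factors. -/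
def symmSub (a : ℕ) (ι : Type*) : Submodule ℂ (EuclideanSpace ℂ (ι → Fin a)) where
  carrier := {ψ | ∀ σ : Equiv.Perm ι, ∀ v : ι → Fin a, ψ (v ∘ σ) = ψ v}
  zero_mem' := fun _ _ => rfl
  add_mem' := by
    intro x y hx hy σ v
    show x (v ∘ σ) + y (v ∘ σ) = x v + y v
    rw [hx σ v, hy σ v]
  smul_mem' := by
    intro c x hx σ v
    show c * x (v ∘ σ) = c * x v
    rw [hx σ v]

/-- Splitting an index `v : Fin d ⊕ Fin d → Fin a` into a pair of indices, realizing
`(ℂ^a)^{⊗ 2d} ≅ (ℂ^a)^{⊗ d} ⊗ (ℂ^a)^{⊗ d}`. -/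
def pairSplit {a d : ℕ} (v : (Fin d ⊕ Fin d) → Fin a) : (Fin d → Fin a) × (Fin d → Fin a) :=
  (v ∘ Sum.inl, v ∘ Sum.inr)

/-- The symmetric subspace `S^{2d}(ℂ^a)`, viewed inside
`(ℂ^a)^{⊗ d} ⊗ (ℂ^a)^{⊗ d} = EuclideanSpace ℂ ((Fin d → Fin a) × (Fin d → Fin a))`. -/
def symmSub2 (a d : ℕ) :
    Submodule ℂ (EuclideanSpace ℂ ((Fin d → Fin a) × (Fin d → Fin a))) where
  carrier := {ψ | ∀ σ : Equiv.Perm (Fin d ⊕ Fin d), ∀ v : (Fin d ⊕ Fin d) → Fin a,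
    ψ (pairSplit (v ∘ σ)) = ψ (pairSplit v)}
  zero_mem' := fun _ _ => rfl
  add_mem' := by
    intro x y hx hy σ v
    show x (pairSplit (v ∘ σ)) + y (pairSplit (v ∘ σ)) = x (pairSplit v) + y (pairSplit v)
    rw [hx σ v, hy σ v]
  smul_mem' := by
    intro c x hx σ v
    show c * x (pairSplit (v ∘ σ)) = c * x (pairSplit v)
    rw [hx σ v]

/-- The tensor product `W₁ ⊗ W₂` of subspaces, as the span of the elementary tensors,
inside the concrete bipartite space. -/
def tensorPairs {ι₁ ι₂ : Type*} [Fintype ι₁] [Fintype ι₂]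
    (W₁ : Submodule ℂ (EuclideanSpace ℂ ι₁)) (W₂ : Submodule ℂ (EuclideanSpace ℂ ι₂)) :
    Submodule ℂ (EuclideanSpace ℂ (ι₁ × ι₂)) :=
  Submodule.span ℂ {χ | ∃ ψ ∈ W₁, ∃ φ ∈ W₂, χ = prodVec2 ψ φ}

/-- The tensor product `U ⊗ V` of two bipartite subspaces
`U, V ⊆ ℂ^{ι₁} ⊗ ℂ^{ι₂}`, viewed as a bipartite subspace of
`(ℂ^{ι₁} ⊗ ℂ^{ι₁}) ⊗ (ℂ^{ι₂} ⊗ ℂ^{ι₂})` via the regrouping isomorphism that swaps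
the middle two tensor factors. -/
def tensorSub {ι₁ ι₂ : Type*} [Fintype ι₁] [Fintype ι₂]
    (U V : Submodule ℂ (EuclideanSpace ℂ (ι₁ × ι₂))) :
    Submodule ℂ (EuclideanSpace ℂ ((ι₁ × ι₁) × (ι₂ × ι₂))) :=
  Submodule.span ℂ {χ | ∃ ψ ∈ U, ∃ φ ∈ V,
    χ = WithLp.toLp 2 (fun p => ψ (p.1.1, p.2.1) * φ (p.1.2, p.2.2))}

/-- Entrywise complex conjugate of a vector, with respect to the standard basis. -/
def conjVec {ι : Type*} (ψ : EuclideanSpace ℂ ι) : EuclideanSpace ℂ ι :=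
  WithLp.toLp 2 (fun v => starRingEnd ℂ (ψ v))

/-- The subspace `Ū` of entrywise complex conjugates of vectors of `U`. -/
def conjSubmodule {ι : Type*} (U : Submodule ℂ (EuclideanSpace ℂ ι)) :
    Submodule ℂ (EuclideanSpace ℂ ι) where
  carrier := conjVec '' U
  zero_mem' := ⟨0, U.zero_mem, by
    ext v; show starRingEnd ℂ 0 = 0; exact map_zero _⟩
  add_mem' := by
    rintro a b ⟨x, hx, rfl⟩ ⟨y, hy, rfl⟩
    exact ⟨x + y, U.add_mem hx hy, by
      ext v; exact map_add (starRingEnd ℂ) (x v) (y v)⟩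
  smul_mem' := by
    rintro c a ⟨x, hx, rfl⟩
    refine ⟨starRingEnd ℂ c • x, U.smul_mem _ hx, ?_⟩
    ext v
    show starRingEnd ℂ (starRingEnd ℂ c * x v) = c * starRingEnd ℂ (x v)
    simp

/-- The content (type) of a word `w : Fin d → Fin a`: the vector `α ∈ ℤ_{≥0}^a`
recording how many times each letter occurs. -/
def wordContent {a d : ℕ} (w : Fin d → Fin a) : Fin a → ℕ :=
  fun i => (Finset.univ.filter fun j => w j = i).card

/-- The monomial orthonormal basis vector `|α⟩ = C(d,α)^{1/2} Π_{S^d(ℂ^a)} (e₁^{⊗α₁} ⊗ ⋯ ⊗ e_a^{⊗α_a})`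
of the symmetric subspace `S^d(ℂ^a)`, where `α = wordContent w` and
`e₁^{⊗α₁} ⊗ ⋯ ⊗ e_a^{⊗α_a}` is the standard basis vector of `(ℂ^a)^{⊗ d}` indexed by any word `w`
of content `α` (the projection does not depend on the choice of such a word). -/
def monVec (a d : ℕ) (w : Fin d → Fin a) : EuclideanSpace ℂ (Fin d → Fin a) :=
  (Real.sqrt (Nat.multinomial Finset.univ (wordContent w)) : ℂ) •
    (Submodule.orthogonalProjectionOnto (symmSub a (Fin d)) (EuclideanSpace.single w 1) :
      EuclideanSpace ℂ (Fin d → Fin a))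

/-- The squared Schmidt coefficients of a bipartite vector `ψ`, i.e. the eigenvalues of
`M Mᴴ` where `M` is the coefficient matrix of `ψ`. -/
def schmidtSqCoeffs {ι₁ ι₂ : Type*} [Fintype ι₁] [Fintype ι₂] [DecidableEq ι₁]
    (ψ : EuclideanSpace ℂ (ι₁ × ι₂)) : ι₁ → ℝ :=
  (Matrix.isHermitian_mul_conjTranspose_self (Matrix.of fun i j => ψ (i, j))).eigenvalues

/-- The Rényi `p`-entropy of (the squared Schmidt coefficients of) a bipartite vector. -/
def renyiEnt (p : ℝ) {ι₁ ι₂ : Type*} [Fintype ι₁] [Fintype ι₂] [DecidableEq ι₁]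
    (ψ : EuclideanSpace ℂ (ι₁ × ι₂)) : ℝ :=
  (1 / (1 - p)) * Real.logb 2 (∑ i, schmidtSqCoeffs ψ i ^ p)

/-- The minimum output Rényi `p`-entropy of a bipartite subspace. -/
def hminEnt (p : ℝ) {ι₁ ι₂ : Type*} [Fintype ι₁] [Fintype ι₂] [DecidableEq ι₁]
    (U : Submodule ℂ (EuclideanSpace ℂ (ι₁ × ι₂))) : ℝ :=
  sInf {x | ∃ ψ ∈ U, ‖ψ‖ = 1 ∧ x = renyiEnt p ψ}

end

/-
Grade the product basis by the weight `|α| = Σᵢ (αᵢ + 1)`. The equations defining `U_C` say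
that, for every weight, the `C`-weighted sum of the coordinates of that weight vanishes. Since
every weight in `[m, Σᵢ nᵢ]` occurs and `C` never vanishes, these `Σᵢ nᵢ - m + 1` equations are
independent, which gives the dimension. The support of a nonzero product vector `φ₁ ⊗ ⋯ ⊗ φ_m`
has a componentwise least element `α` (the first nonzero coordinate of each `φᵢ`), and `α` is
the only support index of weight `|α|`; so the equation of weight `|α|` reads `C_α ψ_α = 0`,
which is impossible.
-/

open Finset

noncomputable section

section FiberSum

variable {𝕜 A K : Type*} [RCLike 𝕜] [Fintype A] [DecidableEq K]

def fiberSum (w : A → K) (C : A → 𝕜) : EuclideanSpace 𝕜 A →ₗ[𝕜] K → 𝕜 where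
  toFun ψ k := ∑ a ∈ univ.filter (w · = k), C a * ψ a
  map_add' x y := by ext k; simp [mul_add, sum_add_distrib]
  map_smul' c x := by ext k; simp [mul_sum, mul_left_comm]

theorem fiberSum_apply (w : A → K) (C : A → 𝕜) (ψ : EuclideanSpace 𝕜 A) (k : K) :
    fiberSum w C ψ k = ∑ a ∈ univ.filter (w · = k), C a * ψ a :=
  rfl

theorem fiberSum_surjective {w : A → K} (hw : Function.Surjective w) {C : A → 𝕜}
    (hC : ∀ a, C a ≠ 0) : Function.Surjective (fiberSum w C) := by
  classical
  intro f
  choose s hs using hw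
  refine ⟨WithLp.toLp 2 fun a => if a = s (w a) then f (w a) / C a else 0, funext fun k => ?_⟩
  rw [fiberSum_apply, sum_eq_single_of_mem (s k) (by simp [hs])]
  · simp [hs, mul_div_cancel₀ _ (hC _)]
  · intro b hb hbk
    simp [(mem_filter.mp hb).2, hbk]

theorem ker_fiberSum_comp {K' : Type*} [DecidableEq K'] (w : A → K') {e : K' → K}
    (he : Function.Injective e) (C : A → 𝕜) :
    LinearMap.ker (fiberSum (e ∘ w) C) = LinearMap.ker (fiberSum w C) := by
  ext ψ
  simp only [LinearMap.mem_ker, funext_iff, fiberSum_apply, Pi.zero_apply, Function.comp_apply]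
  refine ⟨fun h k => by simpa only [he.eq_iff] using h (e k), fun h k => ?_⟩
  by_cases hk : ∃ k', e k' = k
  · obtain ⟨k', rfl⟩ := hk
    simpa only [he.eq_iff] using h k'
  · exact sum_eq_zero fun a ha => absurd ⟨w a, (mem_filter.mp ha).2⟩ hk

theorem finrank_ker_fiberSum_add_card_image (w : A → K) {C : A → 𝕜} (hC : ∀ a, C a ≠ 0) :
    Module.finrank 𝕜 (LinearMap.ker (fiberSum w C)) + #(univ.image w) = Fintype.card A := by
  set w' : A → univ.image w := fun a => ⟨w a, mem_image_of_mem w (mem_univ a)⟩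
  have hsurj : Function.Surjective (fiberSum w' C) :=
    fiberSum_surjective (fun ⟨_, hk⟩ => by simpa [w', Subtype.ext_iff, eq_comm] using hk) hC
  have hker : LinearMap.ker (fiberSum w C) = LinearMap.ker (fiberSum w' C) :=
    ker_fiberSum_comp w' Subtype.val_injective C
  rw [hker]
  have := LinearMap.finrank_range_add_finrank_ker (fiberSum w' C)
  rw [LinearMap.range_eq_top.mpr hsurj, finrank_top, Module.finrank_fintype_fun_eq_card,
    Fintype.card_coe, finrank_euclideanSpace] at this
  omega

end FiberSum

section Weight

variable {ι : Type*} [Fintype ι] {n : ι → ℕ}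

def weight (α : ∀ i, Fin (n i)) : ℕ :=
  ∑ i, ((α i : ℕ) + 1)

theorem weight_strictMono : StrictMono (weight (n := n)) := by
  intro α β hαβ
  obtain ⟨hle, i, hi⟩ := Pi.lt_def.mp hαβ
  exact sum_lt_sum (fun j _ => by have := hle j; simp only [Fin.le_def] at this; omega)
    ⟨i, mem_univ i, by simp only [Fin.lt_def] at hi; omega⟩

theorem card_le_weight (α : ∀ i, Fin (n i)) : Fintype.card ι ≤ weight α := by
  simpa [weight] using sum_le_sum fun i (_ : i ∈ univ) => Nat.le_add_left 1 (α i : ℕ)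

theorem weight_le_sum (α : ∀ i, Fin (n i)) : weight α ≤ ∑ i, n i :=
  sum_le_sum fun i _ => (α i).isLt

theorem exists_weight_eq_succ [DecidableEq ι] {α : ∀ i, Fin (n i)} (h : weight α < ∑ i, n i) :
    ∃ β : ∀ i, Fin (n i), weight β = weight α + 1 := by
  obtain ⟨i, hi⟩ : ∃ i, (α i : ℕ) + 1 < n i := by
    by_contra! h'
    exact h.not_ge (sum_le_sum fun i _ => h' i)
  refine ⟨Function.update α i ⟨α i + 1, hi⟩, ?_⟩
  have hcoord : ∀ j, (Function.update α i ⟨α i + 1, hi⟩ j : ℕ) + 1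
      = (α j + 1) + if j = i then 1 else 0 := by
    intro j
    rcases eq_or_ne j i with rfl | hj <;> simp [*]
  simp only [weight, hcoord, sum_add_distrib, sum_ite_eq', mem_univ, if_true]

theorem image_weight [DecidableEq ι] (hn : ∀ i, 0 < n i) :
    univ.image (weight (n := n)) = Icc (Fintype.card ι) (∑ i, n i) := by
  ext k
  simp only [mem_image, mem_univ, true_and, mem_Icc]
  constructor
  · rintro ⟨α, rfl⟩
    exact ⟨card_le_weight α, weight_le_sum α⟩
  rintro ⟨hk, hkn⟩
  induction k, hk using Nat.le_induction with
  | base => exact ⟨fun i => ⟨0, hn i⟩, by simp [weight]⟩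
  | succ k _ ih =>
    obtain ⟨α, rfl⟩ := ih (by omega)
    exact exists_weight_eq_succ (by omega)

end Weight

section ProductVectors

variable {m : ℕ} {n : Fin m → ℕ}

theorem prodVec_apply_ne_zero_iff {φ : ∀ i, EuclideanSpace ℂ (Fin (n i))} {α : ∀ i, Fin (n i)} :
    prodVec φ α ≠ 0 ↔ ∀ i, φ i (α i) ≠ 0 := by
  simp [prodVec, prod_ne_zero_iff]

theorem exists_isLeast_support_prodVec {φ : ∀ i, EuclideanSpace ℂ (Fin (n i))}
    (h : prodVec φ ≠ 0) : ∃ α₀, IsLeast {α | prodVec φ α ≠ 0} α₀ := by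
  obtain ⟨α, hα⟩ : ∃ α, prodVec φ α ≠ 0 := by
    by_contra! h'
    exact h (PiLp.ext h')
  have hsupp (i : Fin m) : (univ.filter (φ i · ≠ 0)).Nonempty :=
    ⟨α i, by simpa using prodVec_apply_ne_zero_iff.mp hα i⟩
  refine ⟨fun i => (univ.filter (φ i · ≠ 0)).min' (hsupp i), ?_, fun β hβ i => ?_⟩
  · exact prodVec_apply_ne_zero_iff.mpr fun i => (mem_filter.mp (min'_mem _ (hsupp i))).2
  · exact min'_le _ _ (by simpa using prodVec_apply_ne_zero_iff.mp hβ i)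

theorem prodVec_eq_zero_of_fiberSum_weight_eq_zero {C : (∀ i, Fin (n i)) → ℂ}
    (hC : ∀ α, C α ≠ 0) {φ : ∀ i, EuclideanSpace ℂ (Fin (n i))}
    (h : fiberSum weight C (prodVec φ) = 0) : prodVec φ = 0 := by
  by_contra hne
  obtain ⟨α₀, hα₀, hleast⟩ := exists_isLeast_support_prodVec hne
  have hsingle : fiberSum weight C (prodVec φ) (weight α₀) = C α₀ * prodVec φ α₀ := by
    refine sum_eq_single_of_mem α₀ (by simp) fun β hβ hβα₀ => ?_
    by_contra hβ0
    have hlt : α₀ < β := (hleast (right_ne_zero_of_mul hβ0)).lt_of_ne (Ne.symm hβα₀)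
    exact (weight_strictMono hlt).ne (mem_filter.mp hβ).2.symm
  exact mul_ne_zero (hC α₀) hα₀ (hsingle ▸ congrFun h _)

end ProductVectors

end

-- Indices are `0`-based: `α i + 1` is the paper's index `αᵢ ∈ [nᵢ]`.
theorem stmt0_general (m : ℕ) (n : Fin m → ℕ) (hn : ∀ i, 2 ≤ n i)
    (C : (∀ i, Fin (n i)) → ℂ) (hC : ∀ α, C α ≠ 0)
    (U : Submodule ℂ (EuclideanSpace ℂ (∀ i, Fin (n i))))
    (hU : ∀ ψ : EuclideanSpace ℂ (∀ i, Fin (n i)), ψ ∈ U ↔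
      ∀ k : ℕ, ∑ α ∈ Finset.univ.filter
          (fun α : ∀ i, Fin (n i) => (∑ i, ((α i : ℕ) + 1)) = k),
        C α * ψ α = 0) :
    (∀ φ : ∀ i, EuclideanSpace ℂ (Fin (n i)), prodVec φ ∈ U → prodVec φ = 0) ∧
    (Module.finrank ℂ U : ℤ) = (∏ i, (n i : ℤ)) - (∑ i, (n i : ℤ)) + m - 1 := by
  obtain rfl : U = LinearMap.ker (fiberSum weight C) := by
    ext ψ
    rw [hU, LinearMap.mem_ker, funext_iff]
    rfl
  refine ⟨fun φ hφ => prodVec_eq_zero_of_fiberSum_weight_eq_zero hC hφ, ?_⟩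
  have hdim := finrank_ker_fiberSum_add_card_image weight hC
  have hpos (i : Fin m) : 0 < n i := zero_lt_two.trans_le (hn i)
  rw [image_weight hpos, Nat.card_Icc, Fintype.card_pi] at hdim
  simp only [Fintype.card_fin] at hdim
  have hm : m ≤ ∑ i, n i := by
    simpa using sum_le_sum fun i (_ : i ∈ univ) => Nat.succ_le_of_lt (hpos i)
  zify [hm.trans (Nat.le_succ _)] at hdim
  linarith

/-- The subspace `U_C` cut out by the coefficients `C` (here indices are
`0`-based, so `α i + 1` plays the role of the `1`-based index `α_i ∈ [n_i]`) is completely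
entangled and has the maximal dimension `n₁⋯n_m − (n₁+⋯+n_m) + m − 1`. -/
theorem stmt0 (m : ℕ) (hm : 2 ≤ m) (n : Fin m → ℕ) (hn : ∀ i, 2 ≤ n i)
    (C : (∀ i, Fin (n i)) → ℂ) (hC : ∀ α, C α ≠ 0)
    (U : Submodule ℂ (EuclideanSpace ℂ (∀ i, Fin (n i))))
    (hU : ∀ ψ : EuclideanSpace ℂ (∀ i, Fin (n i)), ψ ∈ U ↔
      ∀ k : ℕ, ∑ α ∈ Finset.univ.filter
          (fun α : ∀ i, Fin (n i) => (∑ i, ((α i : ℕ) + 1)) = k),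
        C α * ψ α = 0) :
    (∀ φ : ∀ i, EuclideanSpace ℂ (Fin (n i)), prodVec φ ∈ U → prodVec φ = 0) ∧
    (Module.finrank ℂ U : ℤ) = (∏ i, (n i : ℤ)) - (∑ i, (n i : ℤ)) + m - 1 :=
  stmt0_general m n hn C hC U hU
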